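/- Let φ ∈ J_{k,L;t}(χ₁ × ν) be a nonzero holomorphic Jacobi form of weight k and index t > 0 for an even positive definite lattice L. (1) If the rescaled lattice L(t) is even, i.e. t(x,x) ∈ 2ℤ for all x ∈ L, then the Heisenberg character ν is trivial (ν([x,y;(1/2)(x,y)]) = 1 for all x,y ∈ L), and the same function φ is a holomorphic Jacobi form of weight k and index 1 for the lattice L(t). (2) If L(t) is integral but not even, i.e. t(x,y) ∈ ℤ for all x,y ∈ L but t(x₀,x₀) is odd for some x₀ ∈ L, then ν has order exactly 2 on the integral Heisenberg group, and the same function φ is a holomorphic Jacobi form of weight k and index 1/2 for the even lattice L(2t). -/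

import Mathlib

open Complex Matrix
open scoped Real BigOperators Classical

noncomputable section

abbrev SL2Z := Matrix.SpecialLinearGroup (Fin 2) ℤ

/-- The integral bilinear form attached to a Gram matrix `S`. -/
def bilinZ {ι : Type*} [Fintype ι] (S : Matrix ι ι ℤ) (x y : ι → ℤ) : ℤ :=
  ∑ i, ∑ j, x i * S i j * y j

def bilinQ {ι : Type*} [Fintype ι] (S : Matrix ι ι ℤ) (x y : ι → ℚ) : ℚ :=
  ∑ i, ∑ j, x i * (S i j : ℚ) * y j

def bilinR {ι : Type*} [Fintype ι] (S : Matrix ι ι ℤ) (x y : ι → ℝ) : ℝ :=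
  ∑ i, ∑ j, x i * (S i j : ℝ) * y j

def bilinC {ι : Type*} [Fintype ι] (S : Matrix ι ι ℤ) (x y : ι → ℂ) : ℂ :=
  ∑ i, ∑ j, x i * (S i j : ℂ) * y j

/-- `S` is the Gram matrix of an even positive definite lattice. -/
structure IsEvenPosDef {ι : Type*} [Fintype ι] (S : Matrix ι ι ℤ) : Prop where
  symm : S.IsSymm
  posdef : ∀ x : ι → ℚ, x ≠ 0 → 0 < bilinQ S x x
  even_diag : ∀ i, (2 : ℤ) ∣ S i i

/-- `l ∈ (1/2) L^∨`, written in lattice coordinates:  `2(l,x) ∈ ℤ` for every lattice vector. -/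
def InHalfDual {ι : Type*} [Fintype ι] (S : Matrix ι ι ℤ) (l : ι → ℚ) : Prop :=
  ∀ x : ι → ℤ, ∃ m : ℤ, 2 * bilinQ S l (fun i => (x i : ℚ)) = m

/-- `φ` is a holomorphic Jacobi form of weight `k` and index `t` for the lattice `(ℤ^ι, S)`
with `SL₂(ℤ)`-character (multiplier system) `χ`, Heisenberg character `ν`,
and Fourier coefficients `f`. -/
structure IsJacobiForm {ι : Type*} [Fintype ι] (S : Matrix ι ι ℤ) (k t : ℚ)
    (χ : SL2Z → ℂ) (ν : (ι → ℤ) → (ι → ℤ) → ℂ)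
    (f : ℚ × (ι → ℚ) → ℂ) (φ : ℂ → (ι → ℂ) → ℂ) : Prop where
  holo : DifferentiableOn ℂ (fun p : ℂ × (ι → ℂ) => φ p.1 p.2) {p | 0 < p.1.im}
  modular : ∀ A : SL2Z, ∀ τ : ℂ, 0 < τ.im → ∀ z : ι → ℂ,
    φ (((A.1 0 0 : ℂ) * τ + (A.1 0 1 : ℂ)) / ((A.1 1 0 : ℂ) * τ + (A.1 1 1 : ℂ)))
        (fun i => z i / ((A.1 1 0 : ℂ) * τ + (A.1 1 1 : ℂ)))
      = χ A * ((A.1 1 0 : ℂ) * τ + (A.1 1 1 : ℂ)) ^ (k : ℂ)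
        * Complex.exp ((π : ℂ) * I * (t : ℂ) * (A.1 1 0 : ℂ) * bilinC S z z
            / ((A.1 1 0 : ℂ) * τ + (A.1 1 1 : ℂ)))
        * φ τ z
  elliptic : ∀ x y : ι → ℤ, ∀ τ : ℂ, 0 < τ.im → ∀ z : ι → ℂ,
    φ τ (fun i => z i + (x i : ℂ) * τ + (y i : ℂ))
      = ν x y * Complex.exp (-((π : ℂ) * I * (t : ℂ))
            * ((bilinZ S x x : ℂ) * τ + 2 * bilinC S (fun i => (x i : ℂ)) z))
        * φ τ z
  support : ∀ p : ℚ × (ι → ℚ), f p ≠ 0 →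
    0 ≤ p.1 ∧ InHalfDual S p.2 ∧ 0 ≤ 2 * p.1 * t - bilinQ S p.2 p.2
  expansion : ∀ τ : ℂ, 0 < τ.im → ∀ z : ι → ℂ,
    HasSum (fun p : ℚ × (ι → ℚ) =>
        f p * Complex.exp (2 * (π : ℂ) * I *
          ((p.1 : ℂ) * τ + bilinC S (fun i => (p.2 i : ℂ)) z))) (φ τ z)

/-- The Fourier coefficients `f` are supported on indices of positive hyperbolic norm
(cusp form condition). -/
def IsCuspSupport {ι : Type*} [Fintype ι] (S : Matrix ι ι ℤ) (t : ℚ)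
    (f : ℚ × (ι → ℚ) → ℂ) : Prop :=
  ∀ p : ℚ × (ι → ℚ), f p ≠ 0 → 0 < 2 * p.1 * t - bilinQ S p.2 p.2

/-- `c` is a root of unity. -/
def HasFiniteOrder (c : ℂ) : Prop := ∃ N : ℕ, 0 < N ∧ c ^ N = 1

/-!
Comparing the elliptic law along a composite of two translations gives the Heisenberg relation
`ν(x₁ + x₂, y₁ + y₂) = ν(x₁, y₁) ν(x₂, y₂) e(-t(x₁, y₂))`. The modular law for `τ ↦ τ + 1` turns a
translation by `xτ + y` into one by `xτ + (x + y)`, and the one for `τ ↦ -1/τ` exchanges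
translations by `y` and by `yτ`; together they force `ν(x, y) = exp(πi t (x - y, x - y))`.
So `ν` is trivial when `L(t)` is even, and `±1`-valued but nontrivial when `L(t)` is integral
and odd. Finally, multiplying the Gram matrix by `c` and dividing the index by `c` leaves every
transformation law unchanged, the Fourier indices being multiplied by `c`.
-/

section BilinearForm

variable {ι : Type*} [Fintype ι] (S : Matrix ι ι ℤ)

abbrev bilinCForm : LinearMap.BilinForm ℂ (ι → ℂ) := (S.map ((↑) : ℤ → ℂ)).toBilin'

def intVec (ι : Type*) : (ι → ℤ) →+ (ι → ℂ) := (Int.castAddHom ℂ).compLeft ι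

omit [Fintype ι] in
theorem intVec_apply (x : ι → ℤ) : intVec ι x = fun i => (x i : ℂ) := rfl

theorem bilinZ_eq_toBilin' (x y : ι → ℤ) : bilinZ S x y = S.toBilin' x y := by
  simp [bilinZ, Matrix.toBilin'_apply]

theorem bilinQ_eq_toBilin' (x y : ι → ℚ) :
    bilinQ S x y = (S.map ((↑) : ℤ → ℚ)).toBilin' x y := by
  simp [bilinQ, Matrix.toBilin'_apply]

theorem bilinC_eq_bilinCForm (x y : ι → ℂ) : bilinC S x y = bilinCForm S x y := by
  simp [bilinC, Matrix.toBilin'_apply]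

theorem intCast_bilinZ (x y : ι → ℤ) :
    (bilinZ S x y : ℂ) = bilinC S (fun i => (x i : ℂ)) (fun i => (y i : ℂ)) := by
  simp [bilinC, bilinZ]

theorem intCast_bilinZ_eq_bilinCForm (x y : ι → ℤ) :
    (bilinZ S x y : ℂ) = bilinCForm S (intVec ι x) (intVec ι y) := by
  rw [intCast_bilinZ, bilinC_eq_bilinCForm, intVec_apply, intVec_apply]

theorem bilinCForm_comm (hS : S.IsSymm) (x y : ι → ℂ) : bilinCForm S x y = bilinCForm S y x :=
  (Matrix.isSymm_toBilin'_iff_isSymm.mpr (hS.map _)).eq x y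

theorem bilinZ_single_single (i j : ι) :
    bilinZ S (Pi.single i 1) (Pi.single j 1) = S i j := by
  simp [bilinZ_eq_toBilin']

variable {S} {S' : Matrix ι ι ℤ} {c : ℚ}

theorem bilinQ_eq_mul_of_entries (h : ∀ i j, (S' i j : ℚ) = c * S i j) (x y : ι → ℚ) :
    bilinQ S' x y = c * bilinQ S x y := by
  simp only [bilinQ, h, Finset.mul_sum]
  exact Finset.sum_congr rfl fun _ _ => Finset.sum_congr rfl fun _ _ => by ring

theorem bilinC_eq_mul_of_entries (h : ∀ i j, (S' i j : ℚ) = c * S i j) (x y : ι → ℂ) :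
    bilinC S' x y = c * bilinC S x y := by
  have hC (i j : ι) : (S' i j : ℂ) = c * S i j := by exact_mod_cast congrArg ((↑) : ℚ → ℂ) (h i j)
  simp only [bilinC, hC, Finset.mul_sum]
  exact Finset.sum_congr rfl fun _ _ => Finset.sum_congr rfl fun _ _ => by ring

theorem intCast_bilinZ_eq_mul_of_entries (h : ∀ i j, (S' i j : ℚ) = c * S i j) (x y : ι → ℤ) :
    (bilinZ S' x y : ℂ) = c * bilinZ S x y := by
  rw [intCast_bilinZ, intCast_bilinZ, bilinC_eq_mul_of_entries h]

variable {t : ℚ}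

theorem exists_int_mul_bilinZ_of_even (hS : S.IsSymm)
    (heven : ∀ x : ι → ℤ, ∃ m : ℤ, t * (bilinZ S x x : ℚ) = 2 * m) (x y : ι → ℤ) :
    ∃ m : ℤ, t * (bilinZ S x y : ℚ) = m := by
  obtain ⟨a, ha⟩ := heven (x + y)
  obtain ⟨b, hb⟩ := heven x
  obtain ⟨d, hd⟩ := heven y
  simp only [bilinZ_eq_toBilin', map_add, LinearMap.add_apply,
    (Matrix.isSymm_toBilin'_iff_isSymm.mpr hS).eq y x] at ha hb hd ⊢
  refine ⟨a - b - d, ?_⟩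
  push_cast at ha ⊢
  linear_combination (ha - hb - hd) / 2

theorem exists_intCast_eq_mul_entry (hint : ∀ x y : ι → ℤ, ∃ m : ℤ, t * (bilinZ S x y : ℚ) = m)
    (i j : ι) : ∃ m : ℤ, (m : ℚ) = t * S i j := by
  obtain ⟨m, hm⟩ := hint (Pi.single i 1) (Pi.single j 1)
  exact ⟨m, by rw [← hm, bilinZ_single_single]⟩

end BilinearForm

theorem HasFiniteOrder.ne_zero {c : ℂ} (h : HasFiniteOrder c) : c ≠ 0 := by
  rintro rfl
  obtain ⟨N, hN, h⟩ := h
  simp [zero_pow hN.ne'] at h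

theorem exp_pi_mul_I_mul_eq_neg_one_zpow {t : ℚ} {q m : ℤ} (h : t * (q : ℚ) = m) :
    Complex.exp (π * I * t * q) = (-1) ^ m := by
  have hC : (t : ℂ) * q = m := by exact_mod_cast h
  rw [mul_assoc, hC, mul_comm, Complex.exp_int_mul, Complex.exp_pi_mul_I]

section EllipticFactor

variable {ι : Type*} [Fintype ι] (S : Matrix ι ι ℤ) (t : ℚ)

/-- The automorphy factor of the elliptic law (ii), as a function of `x ∈ ℂ^ι`. -/
def ellipticFactor (x : ι → ℂ) (τ : ℂ) (z : ι → ℂ) : ℂ :=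
  Complex.exp (-(π * I * t) * (bilinCForm S x x * τ + 2 * bilinCForm S x z))

theorem ellipticFactor_ne_zero (x : ι → ℂ) (τ : ℂ) (z : ι → ℂ) : ellipticFactor S t x τ z ≠ 0 :=
  Complex.exp_ne_zero _

@[simp]
theorem ellipticFactor_zero (τ : ℂ) (z : ι → ℂ) : ellipticFactor S t 0 τ z = 1 := by
  simp [ellipticFactor]

theorem ellipticFactor_add_one (x : ι → ℂ) (τ : ℂ) (z : ι → ℂ) :
    ellipticFactor S t x (τ + 1) z
      = ellipticFactor S t x τ z * Complex.exp (-(π * I * t) * bilinCForm S x x) := by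
  simp only [ellipticFactor, ← Complex.exp_add]
  ring_nf

variable {S}

theorem ellipticFactor_add (hS : S.IsSymm) (x₁ x₂ y₂ : ι → ℂ) (τ : ℂ) (z : ι → ℂ) :
    ellipticFactor S t (x₁ + x₂) τ z
      = ellipticFactor S t x₁ τ (z + τ • x₂ + y₂) * ellipticFactor S t x₂ τ z
        * Complex.exp (2 * π * I * t * bilinCForm S x₁ y₂) := by
  simp only [ellipticFactor, ← Complex.exp_add, map_add, map_smul, LinearMap.add_apply,
    smul_eq_mul, bilinCForm_comm S hS x₂ x₁]
  ring_nf

theorem exp_div_mul_ellipticFactor (hS : S.IsSymm) {τ : ℂ} (hτ : τ ≠ 0) (x z : ι → ℂ) :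
    Complex.exp (π * I * t * bilinCForm S (z + τ • x) (z + τ • x) / τ) * ellipticFactor S t x τ z
      = Complex.exp (π * I * t * bilinCForm S z z / τ) := by
  simp only [ellipticFactor, ← Complex.exp_add, map_add, map_smul, LinearMap.add_apply,
    LinearMap.smul_apply, smul_eq_mul, bilinCForm_comm S hS z x]
  congr 1
  field_simp
  ring

end EllipticFactor

namespace IsJacobiForm

variable {ι : Type*} [Fintype ι] {S : Matrix ι ι ℤ} {k t : ℚ} {χ : SL2Z → ℂ}
  {ν : (ι → ℤ) → (ι → ℤ) → ℂ} {f : ℚ × (ι → ℚ) → ℂ} {φ : ℂ → (ι → ℂ) → ℂ}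
  (hφ : IsJacobiForm S k t χ ν f φ)
include hφ

theorem apply_add_smul_add (x y : ι → ℤ) {τ : ℂ} (hτ : 0 < τ.im) (z : ι → ℂ) :
    φ τ (z + τ • intVec ι x + intVec ι y)
      = ν x y * ellipticFactor S t (intVec ι x) τ z * φ τ z := by
  have h := hφ.elliptic x y τ hτ z
  rw [show (fun i => z i + (x i : ℂ) * τ + (y i : ℂ)) = z + τ • intVec ι x + intVec ι y from
    funext fun i => by simp [intVec_apply, mul_comm]] at h
  simpa [ellipticFactor, intCast_bilinZ_eq_bilinCForm, bilinC_eq_bilinCForm, intVec_apply] using h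

theorem apply_add_one {τ : ℂ} (hτ : 0 < τ.im) (z : ι → ℂ) :
    φ (τ + 1) z = χ ModularGroup.T * φ τ z := by
  simpa [ModularGroup.coe_T] using hφ.modular ModularGroup.T τ hτ z

theorem apply_neg_inv {τ : ℂ} (hτ : 0 < τ.im) (z : ι → ℂ) :
    φ (-1 / τ) (τ⁻¹ • z)
      = χ ModularGroup.S * τ ^ (k : ℂ) * Complex.exp (π * I * t * bilinCForm S z z / τ)
        * φ τ z := by
  rw [show τ⁻¹ • z = fun i => z i / τ from funext fun i => by simp [div_eq_inv_mul]]
  simpa [ModularGroup.coe_S, neg_div, bilinC_eq_bilinCForm] using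
    hφ.modular ModularGroup.S τ hτ z

theorem nu_add (hS : S.IsSymm) {τ : ℂ} (hτ : 0 < τ.im) {z : ι → ℂ} (hφz : φ τ z ≠ 0)
    (x₁ y₁ x₂ y₂ : ι → ℤ) :
    ν (x₁ + x₂) (y₁ + y₂)
      = ν x₁ y₁ * ν x₂ y₂ * Complex.exp (-(2 * π * I * t * bilinZ S x₁ y₂)) := by
  have e := hφ.apply_add_smul_add x₁ y₁ hτ (z + τ • intVec ι x₂ + intVec ι y₂)
  rw [hφ.apply_add_smul_add x₂ y₂ hτ z,
    show z + τ • intVec ι x₂ + intVec ι y₂ + τ • intVec ι x₁ + intVec ι y₁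
      = z + τ • intVec ι (x₁ + x₂) + intVec ι (y₁ + y₂) by simp only [map_add]; module,
    hφ.apply_add_smul_add (x₁ + x₂) (y₁ + y₂) hτ z, map_add, ellipticFactor_add t hS] at e
  rw [intCast_bilinZ_eq_bilinCForm, Complex.exp_neg, eq_mul_inv_iff_mul_eq₀ (Complex.exp_ne_zero _)]
  exact mul_right_cancel₀ (mul_ne_zero (mul_ne_zero
    (ellipticFactor_ne_zero S t (intVec ι x₁) τ (z + τ • intVec ι x₂ + intVec ι y₂))
    (ellipticFactor_ne_zero S t (intVec ι x₂) τ z)) hφz) (by linear_combination e)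

theorem nu_add_right_self (hT : χ ModularGroup.T ≠ 0) {τ : ℂ} (hτ : 0 < τ.im) {z : ι → ℂ}
    (hφz : φ τ z ≠ 0) (x y : ι → ℤ) :
    ν x (x + y) = ν x y * Complex.exp (-(π * I * t * bilinZ S x x)) := by
  have e := hφ.apply_add_smul_add x y (by simpa using hτ : 0 < (τ + 1).im) z
  rw [show z + (τ + 1) • intVec ι x + intVec ι y = z + τ • intVec ι x + intVec ι (x + y) by
      rw [map_add]; module,
    hφ.apply_add_one hτ, hφ.apply_add_one hτ, hφ.apply_add_smul_add x (x + y) hτ z,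
    ellipticFactor_add_one] at e
  rw [intCast_bilinZ_eq_bilinCForm, ← neg_mul]
  exact mul_right_cancel₀
    (mul_ne_zero (mul_ne_zero hT (ellipticFactor_ne_zero S t (intVec ι x) τ z)) hφz)
    (by linear_combination e)

theorem nu_zero_left_eq_nu_zero_right (hS : S.IsSymm) (hχS : χ ModularGroup.S ≠ 0) {τ : ℂ}
    (hτ : 0 < τ.im) {z : ι → ℂ} (hφz : φ τ z ≠ 0) (y : ι → ℤ) : ν 0 y = ν y 0 := by
  have hτ₀ : τ ≠ 0 := fun h => by simp [h] at hτ
  have hτ' : 0 < (-1 / τ).im := by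
    simpa [neg_div, ← neg_inv] using UpperHalfPlane.im_inv_neg_coe_pos ⟨τ, hτ⟩
  have e := hφ.apply_add_smul_add 0 y hτ' (τ⁻¹ • z)
  rw [show τ⁻¹ • z + (-1 / τ) • intVec ι 0 + intVec ι y = τ⁻¹ • (z + τ • intVec ι y + intVec ι 0)
      by simp [smul_smul, hτ₀],
    hφ.apply_neg_inv hτ, hφ.apply_neg_inv hτ, hφ.apply_add_smul_add y 0 hτ z, map_zero, add_zero,
    ellipticFactor_zero, ← exp_div_mul_ellipticFactor t hS hτ₀ (intVec ι y) z] at e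
  have hτk : τ ^ (k : ℂ) ≠ 0 := by simp [hτ₀]
  exact mul_right_cancel₀ (mul_ne_zero (mul_ne_zero (mul_ne_zero (mul_ne_zero hχS hτk)
    (Complex.exp_ne_zero _)) (ellipticFactor_ne_zero S t (intVec ι y) τ z)) hφz)
    (by linear_combination -e)

theorem nu_eq_exp (hS : S.IsSymm) (hχ : ∀ A, χ A ≠ 0) (hν : ∀ x y, ν x y ≠ 0)
    (hne : ∃ (τ : ℂ) (z : ι → ℂ), 0 < τ.im ∧ φ τ z ≠ 0) (x y : ι → ℤ) :
    ν x y = Complex.exp (π * I * t * bilinZ S (x - y) (x - y)) := by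
  obtain ⟨τ, z, hτ, hφz⟩ := hne
  have hν₀ (y : ι → ℤ) : ν 0 y = Complex.exp (π * I * t * bilinZ S y y) := by
    have h₁ := hφ.nu_add hS hτ hφz y 0 0 y
    have h₂ := hφ.nu_add_right_self (hχ _) hτ hφz y 0
    simp only [add_zero, zero_add] at h₁ h₂
    rw [h₁, mul_assoc] at h₂
    have h := mul_left_cancel₀ (hν y 0) h₂
    rw [← eq_div_iff (Complex.exp_ne_zero _), ← Complex.exp_sub] at h
    rw [h]
    ring_nf
  have h := hφ.nu_add hS hτ hφz x 0 0 y
  simp only [add_zero, zero_add] at h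
  rw [h, ← hφ.nu_zero_left_eq_nu_zero_right hS (hχ _) hτ hφz, hν₀, hν₀, ← Complex.exp_add,
    ← Complex.exp_add]
  simp only [bilinZ_eq_toBilin', map_sub, LinearMap.sub_apply,
    (Matrix.isSymm_toBilin'_iff_isSymm.mpr hS).eq y x]
  push_cast
  ring_nf

theorem rescale {S' : Matrix ι ι ℤ} {c u : ℚ} (hc : 0 < c)
    (hS' : ∀ i j, (S' i j : ℚ) = c * S i j) (hu : u * c = t) :
    IsJacobiForm S' k u χ ν (fun p => f (p.1, c • p.2)) φ where
  holo := hφ.holo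
  modular A τ hτ z := by
    rw [bilinC_eq_mul_of_entries hS']
    convert hφ.modular A τ hτ z using 5
    rw [← hu]; push_cast; ring
  elliptic x y τ hτ z := by
    rw [intCast_bilinZ_eq_mul_of_entries hS', bilinC_eq_mul_of_entries hS']
    convert hφ.elliptic x y τ hτ z using 4
    rw [← hu]; push_cast; ring
  support p hp := by
    obtain ⟨hn, hl, hnorm⟩ := hφ.support _ hp
    simp only [bilinQ_eq_toBilin', map_smul, LinearMap.smul_apply, smul_eq_mul] at hnorm
    refine ⟨hn, fun x => ?_, ?_⟩
    · obtain ⟨m, hm⟩ := hl x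
      refine ⟨m, ?_⟩
      simp only [← hm, bilinQ_eq_mul_of_entries hS', bilinQ_eq_toBilin', map_smul,
        LinearMap.smul_apply, smul_eq_mul]
    · rw [bilinQ_eq_mul_of_entries hS', bilinQ_eq_toBilin']
      rw [← hu] at hnorm
      nlinarith
  expansion τ hτ z := by
    let σ : ℚ × (ι → ℚ) ≃ ℚ × (ι → ℚ) :=
      (Equiv.refl ℚ).prodCongr (MulAction.toPerm (Units.mk0 c hc.ne'))
    convert σ.hasSum_iff.mpr (hφ.expansion τ hτ z) using 1
    funext p
    have hσ : σ p = (p.1, c • p.2) := rfl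
    have hsmul : (fun i => ((c • p.2) i : ℂ)) = (c : ℂ) • fun i => (p.2 i : ℂ) :=
      funext fun i => by simp
    simp only [Function.comp_apply, hσ, hsmul, bilinC_eq_mul_of_entries hS', bilinC_eq_bilinCForm,
      map_smul, LinearMap.smul_apply, smul_eq_mul]

end IsJacobiForm

/-- For a nonzero Jacobi form of index `t`:
(1) if `L(t)` is even then the Heisenberg character is trivial and `φ` is a Jacobi form of
index `1` for `L(t)`; (2) if `L(t)` is integral but odd then the Heisenberg character has order
exactly two and `φ` is a Jacobi form of index `1/2` for the even lattice `L(2t)`. -/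
theorem statement3 {ι : Type*} [Fintype ι] (S : Matrix ι ι ℤ) (hS : IsEvenPosDef S)
    (k t : ℚ) (ht : 0 < t)
    (χ : SL2Z → ℂ) (hχ : ∀ A, HasFiniteOrder (χ A))
    (ν : (ι → ℤ) → (ι → ℤ) → ℂ) (hν : ∀ x y, HasFiniteOrder (ν x y))
    (f : ℚ × (ι → ℚ) → ℂ) (φ : ℂ → (ι → ℂ) → ℂ)
    (hφ : IsJacobiForm S k t χ ν f φ)
    (hne : ∃ (τ : ℂ) (z : ι → ℂ), 0 < τ.im ∧ φ τ z ≠ 0) :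
    ((∀ x : ι → ℤ, ∃ m : ℤ, t * (bilinZ S x x : ℚ) = 2 * m) →
      (∀ x y : ι → ℤ, ν x y = 1) ∧
      ∃ (S' : Matrix ι ι ℤ) (g : ℚ × (ι → ℚ) → ℂ),
        (∀ i j, (S' i j : ℚ) = t * (S i j : ℚ)) ∧
        IsJacobiForm S' k 1 χ (fun _ _ => 1) g φ) ∧
    ((∀ x y : ι → ℤ, ∃ m : ℤ, t * (bilinZ S x y : ℚ) = m) →
     (∃ (x₀ : ι → ℤ) (m : ℤ), t * (bilinZ S x₀ x₀ : ℚ) = 2 * m + 1) →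
      ((∀ x y : ι → ℤ, ν x y = 1 ∨ ν x y = -1) ∧ (∃ x y : ι → ℤ, ν x y = -1)) ∧
      ∃ (S' : Matrix ι ι ℤ) (g : ℚ × (ι → ℚ) → ℂ),
        (∀ i j, (S' i j : ℚ) = 2 * t * (S i j : ℚ)) ∧
        IsJacobiForm S' k (1/2) χ ν g φ) := by
  have hνexp := hφ.nu_eq_exp hS.symm (fun A => (hχ A).ne_zero) (fun x y => (hν x y).ne_zero) hne
  refine ⟨fun heven => ?_, fun hint ⟨x₀, m₀, hx₀⟩ => ?_⟩
  · have hν₁ : ν = fun _ _ => 1 := by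
      funext x y
      obtain ⟨m, hm⟩ := heven (x - y)
      rw [hνexp, exp_pi_mul_I_mul_eq_neg_one_zpow (m := 2 * m) (by rw [hm]; push_cast; ring)]
      exact (even_two_mul m).neg_one_zpow
    choose S' hS' using exists_intCast_eq_mul_entry (exists_int_mul_bilinZ_of_even hS.symm heven)
    subst hν₁
    exact ⟨fun _ _ => rfl, S', _, hS', hφ.rescale ht hS' (one_mul t)⟩
  · refine ⟨⟨fun x y => ?_, x₀, 0, ?_⟩, ?_⟩
    · obtain ⟨m, hm⟩ := hint (x - y) (x - y)
      rw [hνexp, exp_pi_mul_I_mul_eq_neg_one_zpow hm]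
      exact (Int.even_or_odd m).imp Even.neg_one_zpow Odd.neg_one_zpow
    · rw [hνexp, sub_zero,
        exp_pi_mul_I_mul_eq_neg_one_zpow (m := 2 * m₀ + 1) (by exact_mod_cast hx₀)]
      exact Odd.neg_one_zpow ⟨m₀, rfl⟩
    · have hint₂ (x y : ι → ℤ) : ∃ m : ℤ, 2 * t * (bilinZ S x y : ℚ) = m := by
        obtain ⟨m, hm⟩ := hint x y
        exact ⟨2 * m, by rw [mul_assoc, hm]; push_cast; rfl⟩
      choose S' hS' using exists_intCast_eq_mul_entry hint₂
      exact ⟨S', _, hS', hφ.rescale (by positivity) hS' (by ring)⟩
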